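/- Let n ≥ 2. In the tensor space ℂ^{n×n×2} endowed with the Euclidean topology, the set { T ∈ ℂ^{n×n×2} : rank(T) ≤ n } is not closed and its closure coincides with the whole space ℂ^{n×n×2}. -/

import Mathlib

/-!
A tensor in `ℂ^{n×n×2}` is a pencil of two slices `(A, B)`, and a decomposition into `r`
elementary tensors is the same as simultaneous factorisations `A = X D₀ Y`, `B = X D₁ Y` with
`D₀, D₁` diagonal `r × r`. For `r = n` and `B` invertible this says exactly that `A B⁻¹` is
diagonalizable. Invertible matrices and diagonalizable matrices are dense in `Mₙ(ℂ)` (the latter by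
induction on `n`: bring the matrix to block triangular form along an eigenvector, approximate the
lower block, then move the eigenvalue off the spectrum of that block), so tensors of rank `≤ n` are
dense. They are not all tensors: a diagonalizable nilpotent matrix vanishes, so the pencil
`(N, 1)` with `N ≠ 0` nilpotent has rank `> n`.
-/

open Matrix Finset

/-- The tensor rank of an array `A ∈ 𝔽^{l×m×n}`: the minimal `r` such that `A` is a sum of
`r` elementary (decomposable) tensors `x ⊗ y ⊗ z = (x_i y_j z_k)`. -/
noncomputable def tensorRank {𝔽 : Type*} [Field 𝔽] {l m n : ℕ}
    (A : Fin l → Fin m → Fin n → 𝔽) : ℕ :=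
  sInf {r : ℕ | ∃ (x : Fin r → Fin l → 𝔽) (y : Fin r → Fin m → 𝔽) (z : Fin r → Fin n → 𝔽),
      A = ∑ i : Fin r, fun p q s => x i p * y i q * z i s}

/-- The multilinear matrix multiplication: `(L,M,N)·A` has entries
`b_{pqr} = Σ_{i,j,k} L_{pi} M_{qj} N_{rk} a_{ijk}`. -/
def mulAct {𝔽 : Type*} [Field 𝔽] {l m n : ℕ}
    (L : Matrix (Fin l) (Fin l) 𝔽) (M : Matrix (Fin m) (Fin m) 𝔽) (N : Matrix (Fin n) (Fin n) 𝔽)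
    (A : Fin l → Fin m → Fin n → 𝔽) : Fin l → Fin m → Fin n → 𝔽 :=
  fun p q r => ∑ i, ∑ j, ∑ k, L p i * M q j * N r k * A i j k

/-- The elementary (decomposable) tensor `x ⊗ y ⊗ z = (x_i y_j z_k)`. -/
def elemT {𝔽 : Type*} [Field 𝔽] {l m n : ℕ}
    (x : Fin l → 𝔽) (y : Fin m → 𝔽) (z : Fin n → 𝔽) : Fin l → Fin m → Fin n → 𝔽 :=
  fun i j k => x i * y j * z k

theorem Dense.map_mem_closure {X Y : Type*} [TopologicalSpace X] [TopologicalSpace Y]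
    {s : Set X} {t : Set Y} {f : X → Y} (hs : Dense s) (hf : Continuous f)
    (h : Set.MapsTo f s (closure t)) (x : X) : f x ∈ closure t :=
  closure_closure (s := t) ▸ _root_.map_mem_closure hf (hs x) h

namespace Matrix

variable {ι α K : Type*} [Fintype ι] [DecidableEq ι] [Fintype α] [DecidableEq α]

def IsDiagonalizable [CommRing K] (M : Matrix ι ι K) : Prop :=
  ∃ (P : (Matrix ι ι K)ˣ) (d : ι → K), M = P * diagonal d * P⁻¹

section CommRing

variable [CommRing K]

theorem IsDiagonalizable.conj {M : Matrix ι ι K} (hM : M.IsDiagonalizable)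
    (U : (Matrix ι ι K)ˣ) : (U * M * U⁻¹ : Matrix ι ι K).IsDiagonalizable := by
  obtain ⟨P, d, rfl⟩ := hM
  exact ⟨U * P, d, by simp [mul_assoc]⟩

theorem IsDiagonalizable.reindex {M : Matrix ι ι K} (hM : M.IsDiagonalizable) (e : ι ≃ α) :
    (reindex e e M).IsDiagonalizable := by
  obtain ⟨P, d, rfl⟩ := hM
  let φ := reindexAlgEquiv K K e
  refine ⟨Units.map φ.toMonoidHom P, d ∘ e.symm, ?_⟩
  change φ _ = _
  simp [map_mul, φ, submatrix_diagonal_equiv]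

theorem IsDiagonalizable.eq_zero_of_isNilpotent [IsReduced K] {M : Matrix ι ι K}
    (hM : M.IsDiagonalizable) (hnil : IsNilpotent M) : M = 0 := by
  obtain ⟨P, d, rfl⟩ := hM
  obtain ⟨k, hk⟩ := hnil
  rw [Units.conj_pow, Units.mul_left_eq_zero, Units.mul_right_eq_zero, diagonal_pow,
    diagonal_eq_zero] at hk
  simp [IsReduced.eq_zero d ⟨k, hk⟩]

end CommRing

theorem isDiagonalizable_mul_diagonal_mul [Field K] {X Y : Matrix ι ι K} {c : ι → K}
    (h : X * diagonal c * Y = 1) (d : ι → K) : (X * diagonal d * Y).IsDiagonalizable := by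
  have hc : ∀ i, c i ≠ 0 := by
    intro i hi
    have := congrArg det h
    rw [det_mul, det_mul, det_diagonal, Finset.prod_eq_zero (mem_univ i) hi, det_one,
      mul_zero, zero_mul] at this
    exact zero_ne_one this
  let P : (Matrix ι ι K)ˣ :=
    ⟨X, diagonal c * Y, by rw [← mul_assoc, h], mul_eq_one_comm.mp (by rw [← mul_assoc, h])⟩
  refine ⟨P, d / c, ?_⟩
  have hdc : diagonal (d / c) * diagonal c = diagonal d := by
    rw [diagonal_mul_diagonal']
    exact congrArg diagonal (funext fun i => div_mul_cancel₀ _ (hc i))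
  change _ = X * diagonal (d / c) * (diagonal c * Y)
  rw [← hdc]
  simp only [mul_assoc]

theorem isDiagonalizable_fromBlocks [Field K] (μ : K) (w : Matrix α ι K) (P : (Matrix ι ι K)ˣ)
    {d : ι → K} (hd : ∀ i, d i ≠ μ) :
    (fromBlocks (μ • 1) w 0 (P * diagonal d * P⁻¹ : Matrix ι ι K)).IsDiagonalizable := by
  -- `y` solves the Sylvester equation `μ y + w P = y D`; conjugating by `fromBlocks 1 y 0 P`
  -- then diagonalizes.
  set y : Matrix α ι K := w * (P : Matrix ι ι K) * diagonal fun i => (d i - μ)⁻¹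
  have hy : (diagonal fun _ => μ : Matrix α α K) * y + w * (P : Matrix ι ι K) = y * diagonal d := by
    ext a i
    have hyi : y a i = (w * (P : Matrix ι ι K)) a i * (d i - μ)⁻¹ := mul_diagonal _ _ _ _
    rw [add_apply, diagonal_mul, mul_diagonal, hyi]
    field_simp [sub_ne_zero.mpr (hd i)]
    ring
  have hW : IsUnit (fromBlocks (1 : Matrix α α K) y 0 (P : Matrix ι ι K)) := by
    rw [isUnit_iff_isUnit_det, det_fromBlocks_zero₂₁, det_one, one_mul, ← isUnit_iff_isUnit_det]
    exact P.isUnit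
  refine ⟨hW.unit, Sum.elim (fun _ => μ) d, ?_⟩
  rw [Units.eq_mul_inv_iff_mul_eq, IsUnit.unit_spec, ← fromBlocks_diagonal, fromBlocks_multiply,
    fromBlocks_multiply]
  simpa [smul_one_eq_diagonal] using hy

theorem exists_unit_mulVec_single_eq [Field K] {v : ι → K} {i : ι} (hv : v i ≠ 0) :
    ∃ P : (Matrix ι ι K)ˣ, (P : Matrix ι ι K) *ᵥ Pi.single i 1 = v := by
  have hdet : (updateCol 1 i v).det = v i := by
    rw [← cramer_apply, cramer_one]
    rfl
  refine ⟨((isUnit_iff_isUnit_det _).mpr (hdet ▸ hv.isUnit)).unit, ?_⟩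
  ext j
  simp

theorem reindex_sumCompl_eq_fromBlocks [Semiring K] {N : Matrix ι ι K} {i : ι} {μ : K}
    (h : N *ᵥ Pi.single i 1 = μ • Pi.single i 1) :
    ∃ w M₁, reindex (Equiv.sumCompl (· = i)).symm (Equiv.sumCompl (· = i)).symm N =
      fromBlocks (μ • 1) w 0 M₁ := by
  have hcol : ∀ j, N j i = if j = i then μ else 0 := fun j => by
    simpa [Pi.single_apply] using congrFun h j
  set B := reindex (Equiv.sumCompl (· = i)).symm (Equiv.sumCompl (· = i)).symm N
  refine ⟨B.toBlocks₁₂, B.toBlocks₂₂, ?_⟩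
  rw [← fromBlocks_toBlocks B]
  congr 1
  · ext ⟨a, rfl⟩ ⟨b, rfl⟩
    simp [B, toBlocks₁₁, hcol]
  · ext ⟨a, ha⟩ ⟨b, rfl⟩
    simp [B, toBlocks₂₁, hcol, ha]

theorem dense_setOf_isUnit : Dense {M : Matrix ι ι ℂ | IsUnit M} := by
  intro M
  have hσ : Dense (spectrum ℂ (-M))ᶜ := (finite_spectrum (-M)).countable.dense_compl ℂ
  simpa using map_mem_closure (f := fun z : ℂ => algebraMap ℂ (Matrix ι ι ℂ) z - -M)
    (by fun_prop) (hσ 0) fun z hz => spectrum.notMem_iff.mp hz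

theorem fromBlocks_mem_closure_setOf_isDiagonalizable (μ : ℂ) (w : Matrix α ι ℂ)
    (hι : Dense {M : Matrix ι ι ℂ | M.IsDiagonalizable}) (M : Matrix ι ι ℂ) :
    fromBlocks (μ • 1) w 0 M ∈ closure {N : Matrix (α ⊕ ι) (α ⊕ ι) ℂ | N.IsDiagonalizable} := by
  refine hι.map_mem_closure (f := fun M => fromBlocks (μ • 1) w 0 M) (by fun_prop) ?_ M
  rintro _ ⟨P, d, rfl⟩
  have hd : Dense (Set.range d)ᶜ := (Set.finite_range d).countable.dense_compl ℂ
  exact map_mem_closure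
    (f := fun ν : ℂ => fromBlocks (ν • 1) w 0 (P * diagonal d * P⁻¹ : Matrix ι ι ℂ))
    (by fun_prop) (hd μ) fun ν hν => isDiagonalizable_fromBlocks ν w P fun i hi => hν ⟨i, hi⟩

theorem dense_setOf_isDiagonalizable (ι : Type*) [Fintype ι] [DecidableEq ι] :
    Dense {M : Matrix ι ι ℂ | M.IsDiagonalizable} := by
  induction hcard : Fintype.card ι generalizing ι with
  | zero =>
    have := Fintype.card_eq_zero_iff.mp hcard
    exact fun M => subset_closure ⟨1, 0, Subsingleton.elim _ _⟩
  | succ n ih =>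
    intro M
    have : Nonempty ι := Fintype.card_pos_iff.mp (by omega)
    obtain ⟨μ, hμ⟩ := Module.End.exists_eigenvalue (toLin' M)
    obtain ⟨v, hv⟩ := hμ.exists_hasEigenvector
    obtain ⟨i, hi⟩ := Function.ne_iff.mp hv.right
    obtain ⟨P, hP⟩ := exists_unit_mulVec_single_eq hi
    have hN : ((↑P⁻¹ : Matrix ι ι ℂ) * M * (P : Matrix ι ι ℂ)) *ᵥ Pi.single i 1 =
        μ • Pi.single i 1 := by
      have hv' : M *ᵥ v = μ • v := hv.apply_eq_smul
      rw [← mulVec_mulVec, hP, ← mulVec_mulVec, hv', mulVec_smul, ← hP, mulVec_mulVec,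
        P.inv_mul, one_mulVec]
    obtain ⟨w, M₁, hblock⟩ := reindex_sumCompl_eq_fromBlocks hN
    set e := Equiv.sumCompl (· = i)
    have hM : M = (P : Matrix ι ι ℂ) * reindex e e (fromBlocks (μ • 1) w 0 M₁) *
        (↑P⁻¹ : Matrix ι ι ℂ) := by
      rw [← hblock]
      simp [mul_assoc]
    have hκ : Fintype.card {j // ¬ j = i} = n := by
      simp [Fintype.card_subtype_compl, hcard]
    rw [hM]
    exact map_mem_closure
      (f := fun N => (P : Matrix ι ι ℂ) * reindex e e N * (↑P⁻¹ : Matrix ι ι ℂ)) (by fun_prop)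
      (fromBlocks_mem_closure_setOf_isDiagonalizable μ w (ih _ hκ) M₁)
      fun N (hN : N.IsDiagonalizable) => (hN.reindex e).conj P

end Matrix

section TensorRank

variable {𝔽 : Type*} [Field 𝔽] {l m k r : ℕ}

theorem sum_elemT_apply (x : Fin r → Fin l → 𝔽) (y : Fin r → Fin m → 𝔽) (z : Fin r → Fin k → 𝔽)
    (p : Fin l) (q : Fin m) (s : Fin k) :
    (∑ i, elemT (x i) (y i) (z i)) p q s = ∑ i, x i p * y i q * z i s := by
  simp only [Finset.sum_apply, elemT]

theorem exists_eq_sum_elemT (A : Fin l → Fin m → Fin k → 𝔽) :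
    ∃ (x : Fin (l * m) → Fin l → 𝔽) (y : Fin (l * m) → Fin m → 𝔽) (z : Fin (l * m) → Fin k → 𝔽),
      A = ∑ i, elemT (x i) (y i) (z i) := by
  let e : Fin l × Fin m ≃ Fin (l * m) := finProdFinEquiv
  refine ⟨fun i => Pi.single (e.symm i).1 1, fun i => Pi.single (e.symm i).2 1,
    fun i => A (e.symm i).1 (e.symm i).2, ?_⟩
  funext p q s
  rw [sum_elemT_apply, ← e.sum_comp, Fintype.sum_prod_type]
  simp [Pi.single_apply]

theorem exists_eq_sum_elemT_of_le {A : Fin l → Fin m → Fin k → 𝔽} {N : ℕ} (hrN : r ≤ N)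
    (x : Fin r → Fin l → 𝔽) (y : Fin r → Fin m → 𝔽) (z : Fin r → Fin k → 𝔽)
    (hA : A = ∑ i, elemT (x i) (y i) (z i)) :
    ∃ (x : Fin N → Fin l → 𝔽) (y : Fin N → Fin m → 𝔽) (z : Fin N → Fin k → 𝔽),
      A = ∑ i, elemT (x i) (y i) (z i) := by
  obtain ⟨t, rfl⟩ := Nat.exists_eq_add_of_le hrN
  refine ⟨Fin.append x 0, Fin.append y 0, Fin.append z 0, ?_⟩
  have h0 : elemT (0 : Fin l → 𝔽) (0 : Fin m → 𝔽) (0 : Fin k → 𝔽) = 0 := by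
    funext; simp [elemT]
  simp [Fin.sum_univ_add, hA, h0]

theorem tensorRank_le_iff {A : Fin l → Fin m → Fin k → 𝔽} :
    tensorRank A ≤ r ↔ ∃ (x : Fin r → Fin l → 𝔽) (y : Fin r → Fin m → 𝔽)
      (z : Fin r → Fin k → 𝔽), A = ∑ i, elemT (x i) (y i) (z i) := by
  refine ⟨fun h => ?_, fun ⟨x, y, z, hA⟩ => Nat.sInf_le ⟨x, y, z, hA⟩⟩
  have hne : {r : ℕ | ∃ (x : Fin r → Fin l → 𝔽) (y : Fin r → Fin m → 𝔽) (z : Fin r → Fin k → 𝔽),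
      A = ∑ i, elemT (x i) (y i) (z i)}.Nonempty := ⟨l * m, exists_eq_sum_elemT A⟩
  obtain ⟨x, y, z, hA⟩ := Nat.sInf_mem hne
  exact exists_eq_sum_elemT_of_le h x y z hA

def ofSlices {R : Type*} (S : Fin k → Matrix (Fin l) (Fin m) R) : Fin l → Fin m → Fin k → R :=
  fun p q s => S s p q

theorem continuous_ofSlices {R : Type*} [TopologicalSpace R] :
    Continuous (ofSlices : (Fin k → Matrix (Fin l) (Fin m) R) → Fin l → Fin m → Fin k → R) := by
  unfold ofSlices
  fun_prop

theorem tensorRank_ofSlices_le_iff {S : Fin k → Matrix (Fin l) (Fin m) 𝔽} :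
    tensorRank (ofSlices S) ≤ r ↔ ∃ (X : Matrix (Fin l) (Fin r) 𝔽) (Y : Matrix (Fin r) (Fin m) 𝔽)
      (Z : Fin k → Fin r → 𝔽), ∀ s, S s = X * diagonal (Z s) * Y := by
  have entry : ∀ (X : Matrix (Fin l) (Fin r) 𝔽) (Y : Matrix (Fin r) (Fin m) 𝔽) (d : Fin r → 𝔽) p q,
      (X * diagonal d * Y) p q = ∑ i, X p i * Y i q * d i := fun X Y d p q => by
    rw [mul_apply]
    exact Finset.sum_congr rfl fun i _ => by rw [mul_diagonal]; ring
  rw [tensorRank_le_iff]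
  constructor
  · rintro ⟨x, y, z, hS⟩
    refine ⟨of fun p i => x i p, of y, fun s i => z i s, fun s => ?_⟩
    ext p q
    rw [entry, show S s p q = ofSlices S p q s from rfl, hS, sum_elemT_apply]
    rfl
  · rintro ⟨X, Y, Z, hS⟩
    refine ⟨fun i p => X p i, fun i => Y i, fun i s => Z s i, ?_⟩
    funext p q s
    rw [sum_elemT_apply, ← entry, ← hS]
    rfl

end TensorRank

section Pencil

variable {n : ℕ}

theorem tensorRank_ofSlices_le_iff_isDiagonalizable {𝔽 : Type*} [Field 𝔽]
    (A : Matrix (Fin n) (Fin n) 𝔽) (B : (Matrix (Fin n) (Fin n) 𝔽)ˣ) :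
    tensorRank (ofSlices ![A, (B : Matrix (Fin n) (Fin n) 𝔽)]) ≤ n ↔
      (A * (↑B⁻¹ : Matrix (Fin n) (Fin n) 𝔽)).IsDiagonalizable := by
  rw [tensorRank_ofSlices_le_iff]
  constructor
  · rintro ⟨X, Y, Z, hS⟩
    have hA : A = X * diagonal (Z 0) * Y := hS 0
    have hB : (B : Matrix (Fin n) (Fin n) 𝔽) = X * diagonal (Z 1) * Y := hS 1
    rw [hA, mul_assoc _ Y]
    exact isDiagonalizable_mul_diagonal_mul (by rw [← mul_assoc, ← hB, B.mul_inv]) (Z 0)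
  · rintro ⟨P, d, hP⟩
    refine ⟨P, (↑P⁻¹ : Matrix (Fin n) (Fin n) 𝔽) * B, ![d, 1], fun s => ?_⟩
    fin_cases s
    · simp only [Fin.zero_eta, Fin.isValue, Matrix.cons_val_zero]
      rw [← mul_assoc, ← hP, mul_assoc, B.inv_mul, mul_one]
    · simp

theorem lt_tensorRank_ofSlices_of_isNilpotent {𝔽 : Type*} [Field 𝔽]
    {N : Matrix (Fin n) (Fin n) 𝔽} (hN : IsNilpotent N) (hN0 : N ≠ 0) :
    n < tensorRank (ofSlices ![N, 1]) := by
  rw [← not_le, ← Units.val_one, tensorRank_ofSlices_le_iff_isDiagonalizable, inv_one,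
    Units.val_one, mul_one]
  exact fun h => hN0 (h.eq_zero_of_isNilpotent hN)

theorem ofSlices_mem_closure_setOf_tensorRank_le_of_isUnit (A : Matrix (Fin n) (Fin n) ℂ)
    {B : Matrix (Fin n) (Fin n) ℂ} (hB : IsUnit B) :
    ofSlices ![A, B] ∈ closure {T | tensorRank T ≤ n} := by
  have hmaps : Set.MapsTo (fun C => ofSlices ![C * B, B]) {C | C.IsDiagonalizable}
      {T | tensorRank T ≤ n} := fun C (hC : C.IsDiagonalizable) => by
    rw [Set.mem_ofPred_eq, ← hB.unit_spec, tensorRank_ofSlices_le_iff_isDiagonalizable,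
      Units.mul_inv_cancel_right]
    exact hC
  have h := map_mem_closure (continuous_ofSlices.comp (by fun_prop))
    (dense_setOf_isDiagonalizable (Fin n) (A * B⁻¹)) hmaps
  rwa [Function.comp_apply, nonsing_inv_mul_cancel_right _ _ ((isUnit_iff_isUnit_det B).mp hB)]
    at h

theorem ofSlices_mem_closure_setOf_tensorRank_le (A B : Matrix (Fin n) (Fin n) ℂ) :
    ofSlices ![A, B] ∈ closure {T | tensorRank T ≤ n} :=
  dense_setOf_isUnit.map_mem_closure (f := fun B => ofSlices ![A, B])
    (continuous_ofSlices.comp (by fun_prop))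
    (fun _ => ofSlices_mem_closure_setOf_tensorRank_le_of_isUnit A) B

theorem dense_setOf_tensorRank_le : Dense {T : Fin n → Fin n → Fin 2 → ℂ | tensorRank T ≤ n} := by
  intro T
  have hT : T = ofSlices ![of fun p q => T p q 0, of fun p q => T p q 1] := by
    funext p q s
    fin_cases s <;> rfl
  rw [hT]
  exact ofSlices_mem_closure_setOf_tensorRank_le _ _

end Pencil

/-- Let `n ≥ 2`. In the tensor space `ℂ^{n×n×2}` with the Euclidean topology, the set of
tensors of tensor rank at most `n` is not closed, and its closure is the whole space. -/
theorem rank_le_n_set_not_closed_and_dense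
    {n : ℕ} (hn : 2 ≤ n) :
    ¬ IsClosed {T : Fin n → Fin n → Fin 2 → ℂ | tensorRank T ≤ n} ∧
    closure {T : Fin n → Fin n → Fin 2 → ℂ | tensorRank T ≤ n} = Set.univ := by
  have hdense := dense_setOf_tensorRank_le (n := n)
  refine ⟨fun hclosed => ?_, hdense.closure_eq⟩
  let N : Matrix (Fin n) (Fin n) ℂ := Matrix.single ⟨0, by omega⟩ ⟨1, by omega⟩ 1
  have hN : IsNilpotent N := ⟨2, by simp [N, sq]⟩
  have hN0 : N ≠ 0 := fun h => by simpa [N] using congrFun₂ h ⟨0, by omega⟩ ⟨1, by omega⟩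
  have hmem : ofSlices ![N, 1] ∈ {T | tensorRank T ≤ n} := by
    rw [← hclosed.closure_eq, hdense.closure_eq]
    trivial
  exact (lt_tensorRank_ofSlices_of_isNilpotent hN hN0).not_ge hmem
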